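/- arXiv:2304.12816 — 5 statements merged into one kernel-verified Lean document; each statement's English description precedes it below -/
import Mathlib

section
/- (Weighted Bramble–Hilbert lemma) Let ℓ ≥ 1 and ρ ∈ ℝ. There exists a constant c₂ > 0 (depending on ℓ and ρ) such that for all u ∈ H_ρ^ℓ([0,1]), inf_{v ∈ 𝓟_{ℓ-1}([0,1])} ‖u - v‖_{H_ρ^ℓ([0,1])} ≤ c₂ |u|_{H_ρ^ℓ([0,1])}. -/
open MeasureTheory Polynomial Set

noncomputable def QQ (u : ℝ → ℝ) (ℓ j : ℕ) : Polynomial ℝ :=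
  ∑ k ∈ Finset.range (ℓ - j), Polynomial.monomial k (iteratedDeriv (j + k) u 0 / (Nat.factorial k))

lemma QQ_coeff (u : ℝ → ℝ) (ℓ j k : ℕ) :
    (QQ u ℓ j).coeff k =
      if k < ℓ - j then iteratedDeriv (j + k) u 0 / (Nat.factorial k) else 0 := by
  simp only [QQ, Polynomial.finset_sum_coeff, Polynomial.coeff_monomial]
  rw [Finset.sum_ite_eq' (Finset.range (ℓ - j)) k]
  simp [Finset.mem_range]

lemma QQ_deriv (u : ℝ → ℝ) (ℓ j : ℕ) (hj : j < ℓ) :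
    Polynomial.derivative (QQ u ℓ j) = QQ u ℓ (j + 1) := by
  ext k
  rw [Polynomial.coeff_derivative, QQ_coeff, QQ_coeff]
  by_cases hk : k + 1 < ℓ - j
  · rw [if_pos hk, if_pos (by omega)]
    have hfac : ((Nat.factorial (k+1) : ℕ) : ℝ) = (k+1) * (Nat.factorial k) := by
      push_cast [Nat.factorial_succ]; ring
    have h2 : j + (k+1) = j + 1 + k := by omega
    rw [h2, hfac]
    have hkf : ((Nat.factorial k : ℕ) : ℝ) ≠ 0 := Nat.cast_ne_zero.mpr (Nat.factorial_ne_zero k)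
    field_simp
  · rw [if_neg hk, if_neg (by omega), zero_mul]

lemma QQ_self (u : ℝ → ℝ) (ℓ : ℕ) : QQ u ℓ ℓ = 0 := by
  simp [QQ]

lemma QQ_iter (u : ℝ → ℝ) (ℓ j : ℕ) (hj : j ≤ ℓ) :
    Polynomial.derivative^[j] (QQ u ℓ 0) = QQ u ℓ j := by
  induction j with
  | zero => rfl
  | succ n ih =>
    rw [Function.iterate_succ_apply', ih (by omega), QQ_deriv u ℓ n (by omega)]

lemma QQ_eval_zero (u : ℝ → ℝ) (ℓ j : ℕ) (hj : j < ℓ) :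
    (QQ u ℓ j).eval 0 = iteratedDeriv j u 0 := by
  rw [← Polynomial.coeff_zero_eq_eval_zero, QQ_coeff, if_pos (by omega)]
  simp [Nat.factorial]

lemma QQ_degree (u : ℝ → ℝ) (ℓ : ℕ) : (QQ u ℓ 0).degree < (ℓ : WithBot ℕ) := by
  rw [Polynomial.degree_lt_iff_coeff_zero]
  intro m hm
  rw [QQ_coeff, if_neg (by omega)]

lemma contDiff_polyeval (p : Polynomial ℝ) (n : WithTop ℕ∞) :
    ContDiff ℝ n (fun x : ℝ => p.eval x) := by
  induction p using Polynomial.induction_on' with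
  | add p q hp hq => simpa [Polynomial.eval_add] using hp.add hq
  | monomial k a =>
      simpa [Polynomial.eval_monomial] using (contDiff_const (c := a)).mul (contDiff_id.pow k)

lemma iteratedDeriv_polyeval (p : Polynomial ℝ) (j : ℕ) :
    iteratedDeriv j (fun s : ℝ => p.eval s) = fun s => (Polynomial.derivative^[j] p).eval s := by
  induction j generalizing p with
  | zero => simp
  | succ n ih =>
    rw [iteratedDeriv_succ' (f := fun s : ℝ => p.eval s), Function.iterate_succ_apply]
    have hd : deriv (fun s : ℝ => p.eval s) = fun s => (Polynomial.derivative p).eval s := by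
      funext x; exact p.deriv
    rw [hd, ih]

theorem stmt7 (ℓ : ℕ) (hℓ : 1 ≤ ℓ) (ρ : ℝ) :
    ∃ c₂ > (0 : ℝ), ∀ u : ℝ → ℝ, ContDiff ℝ ℓ u →
      (⨅ p : { p : Polynomial ℝ // p.degree < (ℓ : WithBot ℕ) },
        Real.sqrt (∑ j ∈ Finset.range (ℓ + 1),
          ∫ t in Set.Icc (0 : ℝ) 1,
            (iteratedDeriv j (fun s => u s - (p : Polynomial ℝ).eval s) t) ^ 2 *
              Real.exp (-2 * ρ * t))) ≤
      c₂ * Real.sqrt (∫ t in Set.Icc (0 : ℝ) 1,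
        (iteratedDeriv ℓ u t) ^ 2 * Real.exp (-2 * ρ * t)) := by
  classical
  set E : ℝ := Real.exp (2 * |ρ|) with hE
  have hE1 : 1 ≤ E := Real.one_le_exp (by positivity)
  set c₂ : ℝ := Real.sqrt ((ℓ : ℝ) * ((1+E)/2)^2 * E + 1) with hc₂def
  have hc₂1 : 1 ≤ c₂ := by
    have h : (1:ℝ) ≤ (ℓ : ℝ) * ((1+E)/2)^2 * E + 1 := by
      have : 0 ≤ (ℓ : ℝ) * ((1+E)/2)^2 * E := by positivity
      linarith
    calc (1:ℝ) = Real.sqrt 1 := Real.sqrt_one.symm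
      _ ≤ c₂ := Real.sqrt_le_sqrt h
  refine ⟨c₂, by linarith, ?_⟩
  intro u hu
  set w : ℝ → ℝ := fun t => Real.exp (-2 * ρ * t) with hw
  have hwcont : Continuous w := by fun_prop
  have hwpos : ∀ t, 0 < w t := fun t => Real.exp_pos _
  have hwle : ∀ t ∈ Icc (0:ℝ) 1, w t ≤ E := by
    intro t ht
    apply Real.exp_le_exp.mpr
    have h1 : |ρ * t| ≤ |ρ| := by
      rw [abs_mul]
      calc |ρ| * |t| ≤ |ρ| * 1 := by
            apply mul_le_mul_of_nonneg_left _ (abs_nonneg ρ)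
            rw [abs_le]; constructor <;> [linarith [ht.1]; exact ht.2]
        _ = |ρ| := mul_one _
    have := abs_le.mp h1
    nlinarith [this.1, this.2]
  have hexple : ∀ t ∈ Icc (0:ℝ) 1, Real.exp (2 * ρ * t) ≤ E := by
    intro t ht
    apply Real.exp_le_exp.mpr
    have h1 : |ρ * t| ≤ |ρ| := by
      rw [abs_mul]
      calc |ρ| * |t| ≤ |ρ| * 1 := by
            apply mul_le_mul_of_nonneg_left _ (abs_nonneg ρ)
            rw [abs_le]; constructor <;> [linarith [ht.1]; exact ht.2]
        _ = |ρ| := mul_one _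
    have := abs_le.mp h1
    nlinarith [this.1, this.2]
  have hDcont : ∀ j : ℕ, j ≤ ℓ → Continuous (iteratedDeriv j u) := fun j hj =>
    hu.continuous_iteratedDeriv j (by exact_mod_cast hj)
  set R : ℕ → ℝ → ℝ := fun j t => iteratedDeriv j u t - (QQ u ℓ j).eval t with hR
  have hRcont : ∀ j : ℕ, j ≤ ℓ → Continuous (R j) := fun j hj =>
    (hDcont j hj).sub (QQ u ℓ j).continuous
  have hR0 : ∀ j : ℕ, j < ℓ → R j 0 = 0 := by
    intro j hj
    simp only [hR]
    rw [QQ_eval_zero u ℓ j hj, sub_self]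
  have hRderiv : ∀ j : ℕ, j < ℓ → ∀ x : ℝ, HasDerivAt (R j) (R (j+1) x) x := by
    intro j hj x
    have h1 : HasDerivAt (iteratedDeriv j u) (iteratedDeriv (j+1) u x) x := by
      have hdiff : DifferentiableAt ℝ (iteratedDeriv j u) x :=
        (hu.differentiable_iteratedDeriv j (by exact_mod_cast hj)).differentiableAt
      have h := hdiff.hasDerivAt
      rwa [← iteratedDeriv_succ] at h
    have h2 : HasDerivAt (fun t : ℝ => (QQ u ℓ j).eval t) ((QQ u ℓ (j+1)).eval x) x := by
      have := (QQ u ℓ j).hasDerivAt x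
      rwa [QQ_deriv u ℓ j hj] at this
    exact h1.sub h2
  have hFTC : ∀ j : ℕ, j < ℓ → ∀ t : ℝ, R j t = ∫ s in (0:ℝ)..t, R (j+1) s := by
    intro j hj t
    have h := intervalIntegral.integral_eq_sub_of_hasDerivAt (f := R j) (f' := R (j+1))
      (fun x _ => hRderiv j hj x) ((hRcont (j+1) hj).intervalIntegrable 0 t)
    rw [h, hR0 j hj, sub_zero]
  set I : ℝ := ∫ t in Icc (0:ℝ) 1, (iteratedDeriv ℓ u t)^2 * w t with hI
  have hI0 : 0 ≤ I := setIntegral_nonneg measurableSet_Icc (fun t _ => by positivity)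
  have hIint : IntegrableOn (fun t => (iteratedDeriv ℓ u t)^2 * w t) (Icc (0:ℝ) 1) :=
    (((hDcont ℓ le_rfl).pow 2).mul hwcont).integrableOn_Icc
  -- Cauchy--Schwarz style bound via AM-GM
  have hCS : ∫ t in Icc (0:ℝ) 1, |iteratedDeriv ℓ u t| ≤ (1+E)/2 * Real.sqrt I := by
    rcases eq_or_lt_of_le hI0 with h0 | hpos
    · have hz := (integral_eq_zero_iff_of_nonneg
        (fun t => by positivity : ∀ t, 0 ≤ (iteratedDeriv ℓ u t)^2 * w t) hIint).mp h0.symm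
      have h2 : (fun t => |iteratedDeriv ℓ u t|)
          =ᵐ[volume.restrict (Icc (0:ℝ) 1)] 0 := by
        filter_upwards [hz] with t ht
        have hwp := hwpos t
        have : (iteratedDeriv ℓ u t)^2 = 0 := by
          by_contra hne
          have : 0 < (iteratedDeriv ℓ u t)^2 := lt_of_le_of_ne (sq_nonneg _) (Ne.symm hne)
          have : 0 < (iteratedDeriv ℓ u t)^2 * w t := mul_pos this hwp
          simp only [Pi.zero_apply] at ht
          linarith
        have := pow_eq_zero_iff (n := 2) (by norm_num) |>.mp this
        simp [this]
      rw [integral_congr_ae h2]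
      simp [← h0]
    · set lam : ℝ := Real.sqrt I with hlamdef
      have hlam : 0 < lam := Real.sqrt_pos.mpr hpos
      have hlam2 : lam^2 = I := Real.sq_sqrt hI0
      have hptw : ∀ t ∈ Icc (0:ℝ) 1, |iteratedDeriv ℓ u t| ≤
          (1/(2*lam)) * ((iteratedDeriv ℓ u t)^2 * w t) + (lam/2) * Real.exp (2*ρ*t) := by
        intro t ht
        have hwp := hwpos t
        have hew : Real.exp (2*ρ*t) * w t = 1 := by
          rw [hw, ← Real.exp_add]
          norm_num
        have he : Real.exp (2*ρ*t) = 1 / w t := by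
          rw [eq_div_iff hwp.ne']; exact hew
        have key : 2*lam*(w t)*|iteratedDeriv ℓ u t| ≤
            (iteratedDeriv ℓ u t)^2*(w t)^2 + lam^2 := by
          nlinarith [sq_nonneg (w t * |iteratedDeriv ℓ u t| - lam), sq_abs (iteratedDeriv ℓ u t)]
        rw [he, show 1/(2*lam) * ((iteratedDeriv ℓ u t)^2 * w t) + lam/2 * (1/w t)
            = ((iteratedDeriv ℓ u t)^2*(w t)^2 + lam^2)/(2*lam*(w t)) by
          field_simp, le_div_iff₀ (by positivity)]
        nlinarith [key]
      have hint1 : IntegrableOn (fun t => |iteratedDeriv ℓ u t|) (Icc (0:ℝ) 1) :=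
        (hDcont ℓ le_rfl).abs.integrableOn_Icc
      have hint2 : IntegrableOn (fun t =>
          (1/(2*lam)) * ((iteratedDeriv ℓ u t)^2 * w t) + (lam/2) * Real.exp (2*ρ*t))
          (Icc (0:ℝ) 1) := by
        apply Integrable.add
        · exact hIint.const_mul _
        · exact (Continuous.integrableOn_Icc (f := fun t => Real.exp (2*ρ*t)) (by fun_prop)).const_mul _
      calc ∫ t in Icc (0:ℝ) 1, |iteratedDeriv ℓ u t|
          ≤ ∫ t in Icc (0:ℝ) 1,
            ((1/(2*lam)) * ((iteratedDeriv ℓ u t)^2 * w t) + (lam/2) * Real.exp (2*ρ*t)) :=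
            setIntegral_mono_on hint1 hint2 measurableSet_Icc hptw
        _ = (1/(2*lam)) * I + (lam/2) * ∫ t in Icc (0:ℝ) 1, Real.exp (2*ρ*t) := by
            rw [integral_add (hIint.const_mul _)
              ((Continuous.integrableOn_Icc (f := fun t => Real.exp (2*ρ*t)) (by fun_prop)).const_mul _),
              integral_const_mul, integral_const_mul]
        _ ≤ (1/(2*lam)) * I + (lam/2) * E := by
            have hJ : ∫ t in Icc (0:ℝ) 1, Real.exp (2*ρ*t) ≤ E := by
              calc ∫ t in Icc (0:ℝ) 1, Real.exp (2*ρ*t) ≤ ∫ _t in Icc (0:ℝ) 1, E :=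
                    setIntegral_mono_on (Continuous.integrableOn_Icc (by fun_prop))
                      (integrableOn_const (by simp [Real.volume_Icc]))
                      measurableSet_Icc hexple
                _ = E := by simp [Real.volume_Icc]
            nlinarith [hlam]
        _ = (1+E)/2 * lam := by
            field_simp
            nlinarith [hlam2]
  set C : ℝ := (1+E)/2 * Real.sqrt I with hC
  have hC0 : 0 ≤ C := by positivity
  -- uniform bound on R j for j < ℓ
  have hsup : ∀ n : ℕ, ∀ j : ℕ, j < ℓ → ℓ ≤ j + n → ∀ t ∈ Icc (0:ℝ) 1, |R j t| ≤ C := by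
    intro n
    induction n with
    | zero => intro j hj hn; omega
    | succ n ih =>
      intro j hj hn t ht
      rw [hFTC j hj t]
      by_cases hcase : j + 1 = ℓ
      · have hRl : ∀ s : ℝ, R (j+1) s = iteratedDeriv ℓ u s := by
          intro s
          simp only [hR, hcase, QQ_self, Polynomial.eval_zero, sub_zero]
        calc |∫ s in (0:ℝ)..t, R (j+1) s| ≤ ∫ s in Icc (0:ℝ) 1, |R (j+1) s| := by
              rw [intervalIntegral.integral_of_le ht.1]
              calc |∫ s in Ioc (0:ℝ) t, R (j+1) s| ≤ ∫ s in Ioc (0:ℝ) t, |R (j+1) s| := by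
                    simpa [Real.norm_eq_abs] using
                      norm_integral_le_integral_norm (μ := volume.restrict (Ioc (0:ℝ) t))
                        (R (j+1))
                _ ≤ ∫ s in Icc (0:ℝ) 1, |R (j+1) s| :=
                    setIntegral_mono_set ((hRcont (j+1) (by omega)).abs.integrableOn_Icc)
                      (Filter.Eventually.of_forall fun x => abs_nonneg _)
                      (HasSubset.Subset.eventuallyLE
                        (fun x hx => ⟨le_of_lt hx.1, hx.2.trans ht.2⟩))
          _ ≤ C := by
              have : ∫ s in Icc (0:ℝ) 1, |R (j+1) s| = ∫ s in Icc (0:ℝ) 1, |iteratedDeriv ℓ u s| := by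
                apply integral_congr_ae
                exact Filter.Eventually.of_forall fun s => by simp only [hRl s]
              rw [this]
              exact hCS
      · have hj1 : j + 1 < ℓ := by omega
        have hbound : ∀ x ∈ Set.uIoc (0:ℝ) t, ‖R (j+1) x‖ ≤ C := by
          intro x hx
          rw [Set.uIoc_of_le ht.1] at hx
          have hx1 : x ∈ Icc (0:ℝ) 1 := ⟨le_of_lt hx.1, hx.2.trans ht.2⟩
          simpa [Real.norm_eq_abs] using ih (j+1) hj1 (by omega) x hx1
        have := intervalIntegral.norm_integral_le_of_norm_le_const hbound
        rw [Real.norm_eq_abs] at this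
        calc |∫ s in (0:ℝ)..t, R (j+1) s| ≤ C * |t - 0| := this
          _ ≤ C * 1 := by
              apply mul_le_mul_of_nonneg_left _ hC0
              rw [sub_zero, abs_le]
              exact ⟨by linarith [ht.1], ht.2⟩
          _ = C := mul_one C
  -- termwise integral bound
  have hterm : ∀ j : ℕ, j < ℓ →
      (∫ t in Icc (0:ℝ) 1, (R j t)^2 * w t) ≤ C^2 * E := by
    intro j hj
    have hint : IntegrableOn (fun t => (R j t)^2 * w t) (Icc (0:ℝ) 1) :=
      ((((hRcont j hj.le).pow 2)).mul hwcont).integrableOn_Icc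
    calc ∫ t in Icc (0:ℝ) 1, (R j t)^2 * w t ≤ ∫ _t in Icc (0:ℝ) 1, C^2 * E := by
          apply setIntegral_mono_on hint
            (integrableOn_const (by simp [Real.volume_Icc])) measurableSet_Icc
          intro t ht
          have h1 := hsup ℓ j hj (by omega) t ht
          have h2 := hwle t ht
          have hwp := (hwpos t).le
          have h3 : (R j t)^2 ≤ C^2 := by
            rw [← sq_abs (R j t)]
            exact pow_le_pow_left₀ (abs_nonneg _) h1 2
          calc (R j t)^2 * w t ≤ C^2 * w t := mul_le_mul_of_nonneg_right h3 hwp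
            _ ≤ C^2 * E := mul_le_mul_of_nonneg_left h2 (sq_nonneg C)
      _ = C^2 * E := by simp [Real.volume_Icc]
  -- rewrite the integrands of the infimum candidate
  have hrw : ∀ j : ℕ, j ≤ ℓ →
      iteratedDeriv j (fun s => u s - (QQ u ℓ 0).eval s) = R j := by
    intro j hj
    funext t
    have heq : (fun s => u s - (QQ u ℓ 0).eval s) = u - (fun s : ℝ => (QQ u ℓ 0).eval s) := rfl
    rw [heq]
    have hsub : iteratedDeriv j (u - fun s : ℝ => (QQ u ℓ 0).eval s) t =
        iteratedDeriv j u t - iteratedDeriv j (fun s : ℝ => (QQ u ℓ 0).eval s) t := by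
      rw [← iteratedDerivWithin_univ, ← iteratedDerivWithin_univ, ← iteratedDerivWithin_univ]
      exact iteratedDerivWithin_sub (Set.mem_univ t) uniqueDiffOn_univ
        ((hu.of_le (by exact_mod_cast hj : (j : WithTop ℕ∞) ≤ ℓ)).contDiffWithinAt)
        ((contDiff_polyeval (QQ u ℓ 0) j).contDiffWithinAt)
    rw [hsub, iteratedDeriv_polyeval, QQ_iter u ℓ j hj]
  -- assemble
  have hbdd : BddBelow (Set.range fun p : { p : Polynomial ℝ // p.degree < (ℓ : WithBot ℕ) } =>
      Real.sqrt (∑ j ∈ Finset.range (ℓ + 1),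
        ∫ t in Set.Icc (0 : ℝ) 1,
          (iteratedDeriv j (fun s => u s - (p : Polynomial ℝ).eval s) t) ^ 2 *
            Real.exp (-2 * ρ * t))) := by
    refine ⟨0, ?_⟩
    rintro x ⟨p, rfl⟩
    exact Real.sqrt_nonneg _
  refine le_trans (ciInf_le hbdd ⟨QQ u ℓ 0, QQ_degree u ℓ⟩) ?_
  have hsum : (∑ j ∈ Finset.range (ℓ + 1),
      ∫ t in Set.Icc (0 : ℝ) 1,
        (iteratedDeriv j (fun s => u s - (QQ u ℓ 0).eval s) t) ^ 2 * Real.exp (-2 * ρ * t))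
      ≤ c₂^2 * I := by
    have hre : ∀ j ∈ Finset.range (ℓ + 1),
        (∫ t in Set.Icc (0 : ℝ) 1,
          (iteratedDeriv j (fun s => u s - (QQ u ℓ 0).eval s) t) ^ 2 * Real.exp (-2 * ρ * t))
        = ∫ t in Icc (0:ℝ) 1, (R j t)^2 * w t := by
      intro j hj
      rw [hrw j (by simpa using Nat.lt_succ_iff.mp (Finset.mem_range.mp hj))]
    rw [Finset.sum_congr rfl hre, Finset.sum_range_succ]
    have hlast : (∫ t in Icc (0:ℝ) 1, (R ℓ t)^2 * w t) = I := by
      apply integral_congr_ae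
      apply Filter.Eventually.of_forall
      intro t
      simp only [hR, QQ_self, Polynomial.eval_zero, sub_zero]
    have hsum2 : (∑ j ∈ Finset.range ℓ, ∫ t in Icc (0:ℝ) 1, (R j t)^2 * w t)
        ≤ (ℓ : ℝ) * (C^2 * E) := by
      calc (∑ j ∈ Finset.range ℓ, ∫ t in Icc (0:ℝ) 1, (R j t)^2 * w t)
          ≤ ∑ _j ∈ Finset.range ℓ, C^2 * E :=
            Finset.sum_le_sum fun j hj => hterm j (Finset.mem_range.mp hj)
        _ = (ℓ : ℝ) * (C^2 * E) := by
            rw [Finset.sum_const, Finset.card_range, nsmul_eq_mul]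
    have hC2 : C^2 = ((1+E)/2)^2 * I := by
      rw [hC, mul_pow, Real.sq_sqrt hI0]
    have hc₂2 : c₂^2 = (ℓ : ℝ) * ((1+E)/2)^2 * E + 1 := by
      rw [hc₂def, Real.sq_sqrt (by positivity)]
    rw [hlast, hc₂2]
    have hfin : (ℓ:ℝ)*(C^2*E) + I = ((ℓ:ℝ)*((1+E)/2)^2*E + 1)*I := by
      rw [hC2]; ring
    linarith [hsum2, hfin]
  calc Real.sqrt (∑ j ∈ Finset.range (ℓ + 1),
      ∫ t in Set.Icc (0 : ℝ) 1,
        (iteratedDeriv j (fun s => u s - (QQ u ℓ 0).eval s) t) ^ 2 * Real.exp (-2 * ρ * t))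
      ≤ Real.sqrt (c₂^2 * I) := Real.sqrt_le_sqrt hsum
    _ = c₂ * Real.sqrt I := by
        rw [Real.sqrt_mul (sq_nonneg c₂), Real.sqrt_sq (by linarith)]
    _ = c₂ * Real.sqrt (∫ t in Set.Icc (0 : ℝ) 1,
        (iteratedDeriv ℓ u t) ^ 2 * Real.exp (-2 * ρ * t)) := rfl
end

section
/- (Weighted interpolation error on the reference interval) Let 1 ≤ ℓ ≤ q+1, let t₀,…,t_q be q+1 distinct points in [0,1], let 𝓘̂ be Lagrange interpolation at these points into 𝓟_q, and let ρ ∈ ℝ with weight ŵ(t) = e^{-2ρτt} for some τ > 0. Then there exists C > 0 such that for all û ∈ H_ρ^ℓ([0,1]): ‖û - 𝓘̂û‖_{L_ρ²([0,1])} ≤ C |û|_{H_ρ^ℓ([0,1])}, where ‖v‖_{L_ρ²}² := ∫₀¹ |v|² ŵ(t)² dt and |û|_{H_ρ^ℓ}² := ∫₀¹ |û^{(ℓ)}|² ŵ(t)² dt. -/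
open MeasureTheory intervalIntegral Polynomial Finset

lemma ftc_abs (g : ℝ → ℝ) (hdiff : Differentiable ℝ g) (hcont : Continuous (deriv g))
    (hg0 : g 0 = 0) {s : ℝ} (h0 : 0 ≤ s) (h1 : s ≤ 1) :
    |g s| ≤ ∫ x in (0:ℝ)..1, |deriv g x| := by
  have h := intervalIntegral.integral_deriv_eq_sub (a := (0:ℝ)) (b := s)
    (fun x _ => hdiff x) (hcont.intervalIntegrable 0 s)
  calc |g s| = |∫ x in (0:ℝ)..s, deriv g x| := by rw [h, hg0, sub_zero]
    _ ≤ ∫ x in (0:ℝ)..s, |deriv g x| := intervalIntegral.abs_integral_le_integral_abs h0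
    _ ≤ ∫ x in (0:ℝ)..1, |deriv g x| := by
        apply intervalIntegral.integral_mono_interval le_rfl h0 h1
        · filter_upwards with x using abs_nonneg _
        · exact (hcont.abs).intervalIntegrable 0 1

lemma itd_poly (P : Polynomial ℝ) (k : ℕ) :
    iteratedDeriv k (fun s => P.eval s) = fun s => (Polynomial.derivative^[k] P).eval s := by
  induction k with
  | zero => simp
  | succ k ih =>
    rw [iteratedDeriv_succ, ih]
    funext x
    rw [Function.iterate_succ_apply']
    exact Polynomial.deriv (p := Polynomial.derivative^[k] P)

lemma poly_contDiff (P : Polynomial ℝ) (n : ℕ) : ContDiff ℝ n (fun s => P.eval s) := by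
  have h : ContDiff ℝ (n : ℕ∞) (fun s => P.eval s) :=
    contDiff_of_differentiable_iteratedDeriv (fun m _ => by
      rw [itd_poly]; exact (Polynomial.derivative^[m] P).differentiable)
  exact_mod_cast h

lemma itd_sub {k : ℕ} {f g : ℝ → ℝ} (hf : ContDiff ℝ k f) (hg : ContDiff ℝ k g) (x : ℝ) :
    iteratedDeriv k (fun s => f s - g s) x = iteratedDeriv k f x - iteratedDeriv k g x := by
  simp_rw [← iteratedDerivWithin_univ]
  have : (fun s => f s - g s) = f - g := rfl
  rw [this]
  exact iteratedDerivWithin_sub (Set.mem_univ x) uniqueDiffOn_univ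
    (hf.contDiffWithinAt) (hg.contDiffWithinAt)

lemma PT_coeff (ℓ : ℕ) (c : ℕ → ℝ) (k : ℕ) (hk : k < ℓ) :
    (∑ j ∈ Finset.range ℓ, Polynomial.C (c j) * Polynomial.X ^ j).coeff k = c k := by
  rw [Polynomial.finset_sum_coeff]
  simp only [Polynomial.coeff_C_mul, Polynomial.coeff_X_pow, mul_ite, mul_one, mul_zero]
  rw [Finset.sum_ite_eq (Finset.range ℓ) k c]
  exact if_pos (Finset.mem_range.mpr hk)

lemma PT_deg (ℓ : ℕ) (c : ℕ → ℝ) :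
    (∑ j ∈ Finset.range ℓ, Polynomial.C (c j) * Polynomial.X ^ j).degree
      ≤ ((ℓ - 1 : ℕ) : WithBot ℕ) := by
  apply (Polynomial.degree_sum_le _ _).trans
  apply Finset.sup_le
  intro j hj
  have hj' : j ≤ ℓ - 1 := by have := Finset.mem_range.mp hj; omega
  exact (Polynomial.degree_C_mul_X_pow_le _ _).trans
    ((by exact_mod_cast hj' : (j : WithBot ℕ) ≤ ((ℓ - 1 : ℕ) : WithBot ℕ)))

lemma PT_eval0 (ℓ : ℕ) (c : ℕ → ℝ) (k : ℕ) (hk : k < ℓ) :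
    (Polynomial.derivative^[k] (∑ j ∈ Finset.range ℓ,
      Polynomial.C (c j) * Polynomial.X ^ j)).eval 0 = (k.factorial : ℝ) * c k := by
  rw [← Polynomial.coeff_zero_eq_eval_zero, Polynomial.coeff_iterate_derivative, zero_add,
    PT_coeff ℓ c k hk, Nat.descFactorial_self, nsmul_eq_mul]

lemma PT_itd_top (ℓ : ℕ) (hℓ : 1 ≤ ℓ) (c : ℕ → ℝ) :
    Polynomial.derivative^[ℓ] (∑ j ∈ Finset.range ℓ,
      Polynomial.C (c j) * Polynomial.X ^ j) = 0 := by
  apply Polynomial.iterate_derivative_eq_zero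
  set P := ∑ j ∈ Finset.range ℓ, Polynomial.C (c j) * Polynomial.X ^ j with hP
  rcases eq_or_ne P 0 with h | h
  · rw [h]; simpa [Polynomial.natDegree_zero] using (by omega : 0 < ℓ)
  · rw [Polynomial.natDegree_lt_iff_degree_lt h]
    exact lt_of_le_of_lt (PT_deg ℓ c) (by exact_mod_cast (by omega : ℓ - 1 < ℓ))

set_option maxHeartbeats 2000000 in
theorem stmt9 (q ℓ : ℕ) (hℓ : 1 ≤ ℓ) (hℓq : ℓ ≤ q + 1) (ρ τ : ℝ) (hτ : 0 < τ)
    (t : Fin (q + 1) → ℝ) (ht : ∀ i, t i ∈ Set.Icc (0 : ℝ) 1)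
    (hinj : Function.Injective t) :
    ∃ C > (0 : ℝ), ∀ u : ℝ → ℝ, ContDiff ℝ ℓ u → ∀ p : Polynomial ℝ,
      p.degree ≤ (q : WithBot ℕ) → (∀ i, p.eval (t i) = u (t i)) →
      Real.sqrt (∫ s in Set.Icc (0 : ℝ) 1,
          (u s - p.eval s) ^ 2 * (Real.exp (-2 * ρ * τ * s)) ^ 2) ≤
        C * Real.sqrt (∫ s in Set.Icc (0 : ℝ) 1,
          (iteratedDeriv ℓ u s) ^ 2 * (Real.exp (-2 * ρ * τ * s)) ^ 2) := by
  classical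
  set W : ℝ := Real.exp (2 * |ρ| * τ) with hWdef
  have hW : 0 < W := Real.exp_pos _
  have hw_pos : ∀ s : ℝ, 0 < Real.exp (-2 * ρ * τ * s) := fun s => Real.exp_pos _
  have hw_ub : ∀ s ∈ Set.Icc (0:ℝ) 1, Real.exp (-2 * ρ * τ * s) ≤ W := by
    intro s hs
    rw [hWdef]
    apply Real.exp_le_exp.mpr
    obtain ⟨hs0, hs1⟩ := hs
    have h1 : 0 ≤ (|ρ| + ρ) * s := mul_nonneg (by nlinarith [neg_le_abs ρ]) hs0
    have h2 : 0 ≤ |ρ| * (1 - s) := mul_nonneg (abs_nonneg ρ) (by linarith)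
    have h3 : 0 ≤ τ * ((|ρ| + ρ) * s + |ρ| * (1 - s)) := mul_nonneg hτ.le (by linarith)
    nlinarith [h3]
  have hw_lb : ∀ s ∈ Set.Icc (0:ℝ) 1, 1 ≤ Real.exp (-2 * ρ * τ * s) * W := by
    intro s hs
    rw [hWdef, ← Real.exp_add, show (1:ℝ) = Real.exp 0 from (Real.exp_zero).symm]
    apply Real.exp_le_exp.mpr
    obtain ⟨hs0, hs1⟩ := hs
    have h1 : 0 ≤ (|ρ| - ρ) * s := mul_nonneg (by nlinarith [le_abs_self ρ]) hs0
    have h2 : 0 ≤ |ρ| * (1 - s) := mul_nonneg (abs_nonneg ρ) (by linarith)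
    have h3 : 0 ≤ τ * ((|ρ| - ρ) * s + |ρ| * (1 - s)) := mul_nonneg hτ.le (by linarith)
    nlinarith [h3]
  have hwc : Continuous (fun s : ℝ => Real.exp (-2 * ρ * τ * s)) := by fun_prop
  -- Lagrange basis bound
  have hG : Continuous (fun s : ℝ =>
      ∑ i : Fin (q+1), |Polynomial.eval s (Lagrange.basis Finset.univ t i)|) := by
    apply continuous_finset_sum
    intro i _
    exact ((Lagrange.basis Finset.univ t i).continuous).abs
  obtain ⟨Λ, hΛ⟩ := (isCompact_Icc (a := (0:ℝ)) (b := 1)).exists_bound_of_continuousOn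
    hG.continuousOn
  have hΛ0 : 0 ≤ Λ := le_trans (norm_nonneg _) (hΛ 0 (by norm_num))
  have hGle : ∀ s ∈ Set.Icc (0:ℝ) 1,
      (∑ i : Fin (q+1), |Polynomial.eval s (Lagrange.basis Finset.univ t i)|) ≤ Λ :=
    fun s hs => le_trans (le_abs_self _) (hΛ s hs)
  refine ⟨(1+Λ)*W^2 + 1, by nlinarith [mul_nonneg (by linarith : (0:ℝ) ≤ 1+Λ) (sq_nonneg W)],
    fun u hu p hpdeg hpval => ?_⟩
  set f := iteratedDeriv ℓ u with hfdef
  have hfc : Continuous f := hu.continuous_iteratedDeriv ℓ (by exact_mod_cast le_refl ℓ)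
  set M := ∫ x in (0:ℝ)..1, |f x| with hM
  have hM0 : 0 ≤ M := intervalIntegral.integral_nonneg (by norm_num) (fun x _ => abs_nonneg _)
  set c : ℕ → ℝ := fun j => iteratedDeriv j u 0 / (j.factorial : ℝ) with hc
  set PT : Polynomial ℝ := ∑ j ∈ Finset.range ℓ, Polynomial.C (c j) * Polynomial.X ^ j with hPT
  set v : ℝ → ℝ := fun s => u s - PT.eval s with hv
  have hPTc : ContDiff ℝ ℓ (fun s : ℝ => PT.eval s) := poly_contDiff PT ℓ
  have hvC : ContDiff ℝ ℓ v := hu.sub hPTc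
  have hvk : ∀ k, k ≤ ℓ → ∀ x, iteratedDeriv k v x
      = iteratedDeriv k u x - (Polynomial.derivative^[k] PT).eval x := by
    intro k hk x
    have h1 : iteratedDeriv k v x = iteratedDeriv k u x - iteratedDeriv k (fun s => PT.eval s) x :=
      itd_sub (hu.of_le (by exact_mod_cast hk)) (hPTc.of_le (by exact_mod_cast hk)) x
    rw [h1, itd_poly]
  have hv0 : ∀ k, k < ℓ → iteratedDeriv k v 0 = 0 := by
    intro k hk
    rw [hvk k hk.le 0, hPT, PT_eval0 ℓ c k hk, hc]
    have : (k.factorial : ℝ) ≠ 0 := Nat.cast_ne_zero.mpr k.factorial_ne_zero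
    field_simp
    simp
  have hvl : ∀ x, iteratedDeriv ℓ v x = f x := by
    intro x
    rw [hvk ℓ le_rfl x, hPT, PT_itd_top ℓ hℓ c]
    simp [hfdef]
  -- key induction
  have key : ∀ m : ℕ, ∀ s ∈ Set.Icc (0:ℝ) 1, 1 ≤ m → m ≤ ℓ →
      |iteratedDeriv (ℓ - m) v s| ≤ M := by
    intro m
    induction m with
    | zero => intro s hs h1 h2; omega
    | succ m ih =>
      intro s hs _ hm
      have hklt : ℓ - (m+1) < ℓ := by omega
      have hsucc : ℓ - (m+1) + 1 = ℓ - m := by omega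
      have hdiff : Differentiable ℝ (iteratedDeriv (ℓ - (m+1)) v) :=
        hvC.differentiable_iteratedDeriv _ (by exact_mod_cast hklt)
      have hdc : Continuous (deriv (iteratedDeriv (ℓ - (m+1)) v)) := by
        rw [← iteratedDeriv_succ, hsucc]
        exact hvC.continuous_iteratedDeriv _ (by exact_mod_cast Nat.sub_le ℓ m)
      have h0 : iteratedDeriv (ℓ - (m+1)) v 0 = 0 := hv0 _ hklt
      refine (ftc_abs _ hdiff hdc h0 hs.1 hs.2).trans ?_
      have hrw : (∫ x in (0:ℝ)..1, |deriv (iteratedDeriv (ℓ - (m+1)) v) x|)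
          = ∫ x in (0:ℝ)..1, |iteratedDeriv (ℓ - m) v x| := by
        simp_rw [← iteratedDeriv_succ, hsucc]
      rw [hrw]
      rcases Nat.eq_zero_or_pos m with hm0 | hm1
      · subst hm0
        simp only [Nat.sub_zero]
        have : (∫ x in (0:ℝ)..1, |iteratedDeriv ℓ v x|) = ∫ x in (0:ℝ)..1, |f x| := by
          simp_rw [hvl]
        rw [this, hM]
      · have hcont : Continuous (iteratedDeriv (ℓ - m) v) :=
          hvC.continuous_iteratedDeriv _ (by exact_mod_cast Nat.sub_le ℓ m)
        calc (∫ x in (0:ℝ)..1, |iteratedDeriv (ℓ - m) v x|) ≤ ∫ _x in (0:ℝ)..1, M := by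
              apply intervalIntegral.integral_mono_on (by norm_num)
                (hcont.abs.intervalIntegrable 0 1) (intervalIntegrable_const)
              intro x hx
              exact ih x hx hm1 (by omega)
          _ = M := by simp
  have hvM : ∀ x ∈ Set.Icc (0:ℝ) 1, |v x| ≤ M := by
    intro x hx
    have hkey := key ℓ x hx hℓ le_rfl
    simpa [Nat.sub_self, iteratedDeriv_zero] using hkey
  -- interpolation identity
  have hPTdeg : PT.degree ≤ (q : WithBot ℕ) := by
    rw [hPT]
    exact (PT_deg ℓ c).trans (by exact_mod_cast (by omega : ℓ - 1 ≤ q))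
  have hint : p - PT = Lagrange.interpolate Finset.univ t (fun i => v (t i)) := by
    refine Lagrange.eq_interpolate_of_eval_eq (fun i => v (t i)) (Set.injOn_of_injective hinj) ?_ ?_
    · have hcard : (#(Finset.univ : Finset (Fin (q+1))) : ℕ) = q + 1 := by simp
      calc (p - PT).degree ≤ max p.degree PT.degree := Polynomial.degree_sub_le _ _
        _ ≤ (q : WithBot ℕ) := max_le hpdeg hPTdeg
        _ < ((q + 1 : ℕ) : WithBot ℕ) := by exact_mod_cast Nat.lt_succ_self q
        _ = (#(Finset.univ : Finset (Fin (q+1))) : WithBot ℕ) := by rw [hcard]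
    · intro i _
      rw [Polynomial.eval_sub, hpval i]
  have herr : ∀ s ∈ Set.Icc (0:ℝ) 1, |u s - p.eval s| ≤ (1+Λ) * M := by
    intro s hs
    have hLag : |Polynomial.eval s (p - PT)| ≤ Λ * M := by
      rw [hint, Lagrange.interpolate_apply, Polynomial.eval_finset_sum]
      refine (Finset.abs_sum_le_sum_abs _ _).trans ?_
      have hterm : ∀ i ∈ (Finset.univ : Finset (Fin (q+1))),
          |Polynomial.eval s (Polynomial.C (v (t i)) * Lagrange.basis Finset.univ t i)|
            ≤ M * |Polynomial.eval s (Lagrange.basis Finset.univ t i)| := by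
        intro i _
        rw [Polynomial.eval_mul, Polynomial.eval_C, abs_mul]
        exact mul_le_mul_of_nonneg_right (hvM _ (ht i)) (abs_nonneg _)
      refine (Finset.sum_le_sum hterm).trans ?_
      rw [← Finset.mul_sum]
      calc M * ∑ i : Fin (q+1), |Polynomial.eval s (Lagrange.basis Finset.univ t i)|
          ≤ M * Λ := mul_le_mul_of_nonneg_left (hGle s hs) hM0
        _ = Λ * M := mul_comm _ _
    have hsplit : u s - p.eval s = v s - Polynomial.eval s (p - PT) := by
      rw [hv, Polynomial.eval_sub]; ring
    calc |u s - p.eval s| = |v s - Polynomial.eval s (p - PT)| := by rw [hsplit]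
      _ ≤ |v s| + |Polynomial.eval s (p - PT)| := abs_sub _ _
      _ ≤ M + Λ * M := add_le_add (hvM s hs) hLag
      _ = (1+Λ) * M := by ring
  -- weighted L² bound of seminorm
  set A := Real.sqrt (∫ s in Set.Icc (0:ℝ) 1, f s ^ 2 * (Real.exp (-2 * ρ * τ * s)) ^ 2)
    with hA
  have hA0 : 0 ≤ A := Real.sqrt_nonneg _
  have hI2c : Continuous (fun s => f s ^ 2 * (Real.exp (-2 * ρ * τ * s)) ^ 2) :=
    (hfc.pow 2).mul (hwc.pow 2)
  have hI2nn : 0 ≤ ∫ s in Set.Icc (0:ℝ) 1, f s ^ 2 * (Real.exp (-2 * ρ * τ * s)) ^ 2 :=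
    setIntegral_nonneg measurableSet_Icc (fun x _ => by positivity)
  have hA2 : A ^ 2 = ∫ s in Set.Icc (0:ℝ) 1, f s ^ 2 * (Real.exp (-2 * ρ * τ * s)) ^ 2 :=
    Real.sq_sqrt hI2nn
  have hMIcc : M = ∫ x in Set.Icc (0:ℝ) 1, |f x| := by
    rw [hM, intervalIntegral.integral_of_le (by norm_num : (0:ℝ) ≤ 1),
      MeasureTheory.integral_Icc_eq_integral_Ioc]
  have hMle : M ≤ W * A := by
    have hkey : ∀ ε : ℝ, 0 < ε → M ≤ W * A + W * ε := by
      intro ε hε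
      set cc := (A + ε) / W with hcc
      have hccpos : 0 < cc := div_pos (by linarith) hW
      have hccW : cc * W = A + ε := by rw [hcc]; field_simp
      have hpt : ∀ s ∈ Set.Icc (0:ℝ) 1,
          |f s| ≤ f s ^ 2 * (Real.exp (-2 * ρ * τ * s)) ^ 2 / (2*cc) + cc * W ^ 2 / 2 := by
        intro s hs
        have hw1 := hw_lb s hs
        have hwp := hw_pos s
        have h2 : 2 * cc * |f s| ≤ f s ^ 2 * (Real.exp (-2 * ρ * τ * s)) ^ 2 + cc ^ 2 * W ^ 2 := by
          nlinarith [sq_nonneg (|f s| * Real.exp (-2 * ρ * τ * s) - cc * W), sq_abs (f s),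
            mul_nonneg (mul_nonneg hccpos.le (abs_nonneg (f s)))
              (sub_nonneg.mpr hw1)]
        have heq : f s ^ 2 * (Real.exp (-2 * ρ * τ * s)) ^ 2 / (2*cc) + cc * W ^ 2 / 2
            = (f s ^ 2 * (Real.exp (-2 * ρ * τ * s)) ^ 2 + cc ^ 2 * W ^ 2) / (2*cc) := by
          field_simp
        rw [heq, le_div_iff₀ (mul_pos two_pos hccpos)]
        nlinarith [h2]
      have hconst : IntegrableOn (fun _ : ℝ => cc * W ^ 2 / 2) (Set.Icc (0:ℝ) 1) volume := by
        apply (MeasureTheory.integrableOn_const_iff).mpr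
        right
        rw [Real.volume_Icc]
        norm_num
      have hIadd : (∫ s in Set.Icc (0:ℝ) 1,
            (f s ^ 2 * (Real.exp (-2 * ρ * τ * s)) ^ 2 / (2*cc) + cc * W ^ 2 / 2))
          = (∫ s in Set.Icc (0:ℝ) 1, f s ^ 2 * (Real.exp (-2 * ρ * τ * s)) ^ 2) / (2*cc)
            + cc * W ^ 2 / 2 := by
        rw [MeasureTheory.integral_add ((hI2c.integrableOn_Icc).div_const _) hconst,
          MeasureTheory.integral_div]
        congr 1
        rw [MeasureTheory.setIntegral_const]
        rw [Real.volume_real_Icc]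
        norm_num
      have hstep : M ≤ A ^ 2 / (2*cc) + cc * W ^ 2 / 2 := by
        rw [hMIcc, hA2]
        calc (∫ x in Set.Icc (0:ℝ) 1, |f x|)
            ≤ ∫ s in Set.Icc (0:ℝ) 1,
              (f s ^ 2 * (Real.exp (-2 * ρ * τ * s)) ^ 2 / (2*cc) + cc * W ^ 2 / 2) := by
              apply MeasureTheory.setIntegral_mono_on (hfc.abs.integrableOn_Icc)
                (((hI2c.integrableOn_Icc).div_const _).add hconst) measurableSet_Icc hpt
          _ = _ := hIadd
      have h4 : A ^ 2 / (2*cc) ≤ (A + ε) * W / 2 := by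
        rw [div_le_iff₀ (mul_pos two_pos hccpos)]
        have hrr : (A + ε) * W / 2 * (2 * cc) = (A + ε) * (cc * W) := by ring
        rw [hrr, hccW]
        nlinarith [hε, hA0]
      have h5 : cc * W ^ 2 / 2 = (A + ε) * W / 2 := by
        rw [hcc]; field_simp
      nlinarith [hstep, h4, h5]
    by_contra hcon
    push_neg at hcon
    have hε : 0 < (M - W * A) / (2 * W) := div_pos (by linarith) (by linarith)
    have hk := hkey _ hε
    have heq : W * ((M - W * A) / (2 * W)) = (M - W * A) / 2 := by
      field_simp
    rw [heq] at hk
    linarith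
  -- assemble
  have hEc : Continuous (fun s => (u s - p.eval s) ^ 2 * (Real.exp (-2 * ρ * τ * s)) ^ 2) :=
    ((hu.continuous.sub p.continuous).pow 2).mul (hwc.pow 2)
  have hBnn : 0 ≤ (1+Λ) * M * W := mul_nonneg (mul_nonneg (by linarith) hM0) hW.le
  have hsup : ∀ s ∈ Set.Icc (0:ℝ) 1,
      (u s - p.eval s) ^ 2 * (Real.exp (-2 * ρ * τ * s)) ^ 2 ≤ ((1+Λ) * M * W) ^ 2 := by
    intro s hs
    have h1 := herr s hs
    have h2 := hw_ub s hs
    have h3 := hw_pos s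
    have habs : |u s - p.eval s| * Real.exp (-2 * ρ * τ * s) ≤ ((1+Λ) * M) * W :=
      mul_le_mul h1 h2 h3.le (mul_nonneg (by linarith) hM0)
    calc (u s - p.eval s) ^ 2 * (Real.exp (-2 * ρ * τ * s)) ^ 2
        = (|u s - p.eval s| * Real.exp (-2 * ρ * τ * s)) ^ 2 := by rw [mul_pow, sq_abs]
      _ ≤ (((1+Λ) * M) * W) ^ 2 := by
          apply pow_le_pow_left₀ (by positivity) habs
      _ = ((1+Λ) * M * W) ^ 2 := by ring
  have hI1le : (∫ s in Set.Icc (0:ℝ) 1, (u s - p.eval s) ^ 2 * (Real.exp (-2 * ρ * τ * s)) ^ 2)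
      ≤ ((1+Λ) * M * W) ^ 2 := by
    calc (∫ s in Set.Icc (0:ℝ) 1, (u s - p.eval s) ^ 2 * (Real.exp (-2 * ρ * τ * s)) ^ 2)
        ≤ ∫ _s in Set.Icc (0:ℝ) 1, ((1+Λ) * M * W) ^ 2 := by
          apply MeasureTheory.setIntegral_mono_on (hEc.integrableOn_Icc)
            ((MeasureTheory.integrableOn_const_iff).mpr (Or.inr (by rw [Real.volume_Icc]; norm_num)))
            measurableSet_Icc hsup
      _ = ((1+Λ) * M * W) ^ 2 := by
          rw [MeasureTheory.setIntegral_const, Real.volume_real_Icc]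
          norm_num
  calc Real.sqrt (∫ s in Set.Icc (0:ℝ) 1,
        (u s - p.eval s) ^ 2 * (Real.exp (-2 * ρ * τ * s)) ^ 2)
      ≤ Real.sqrt (((1+Λ) * M * W) ^ 2) := Real.sqrt_le_sqrt hI1le
    _ = (1+Λ) * M * W := Real.sqrt_sq hBnn
    _ ≤ (1+Λ) * (W * A) * W := by
        nlinarith [mul_nonneg (mul_nonneg (by linarith : (0:ℝ) ≤ 1+Λ) hW.le)
          (sub_nonneg.mpr hMle)]
    _ = ((1+Λ) * W ^ 2) * A := by ring
    _ ≤ ((1+Λ) * W ^ 2 + 1) * A := by nlinarith [hA0]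
end

section
/- (Gauss–Radau identity, Lemma 5.2 analogue of [AM04, Lemma 2.1]) Let q ≥ 1, let t₀,…,t_q ∈ (0,1] be the right-sided Gauss–Radau quadrature points on [0,1] (with t_q = 1) with weights ω₀,…,ω_q, exact for polynomials of degree ≤ 2q, and let Q[v] := Σᵢ ωᵢ v(tᵢ). Let p ∈ 𝓟_{q+1}([0,1]) and define p̃ ∈ 𝓟_q([0,1]) as the Lagrange interpolant at the Gauss–Radau points of the function t ↦ p(t)/t. Then ∫₀¹ p'(t) p̃(t) dt = (1/2) Q[p̃²] + (1/2) p(1)² − p(0) p̃(0). -/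
open Polynomial intervalIntegral

lemma poly_ftc (r : Polynomial ℝ) :
    ∫ x in (0:ℝ)..1, r.derivative.eval x = r.eval 1 - r.eval 0 :=
  intervalIntegral.integral_eq_sub_of_hasDerivAt (fun x _ => r.hasDerivAt x)
    ((r.derivative.continuous_aeval).intervalIntegrable _ _)

lemma poly_intble (r : Polynomial ℝ) :
    IntervalIntegrable (fun x => r.eval x) MeasureTheory.volume (0:ℝ) 1 :=
  (r.continuous_aeval).intervalIntegrable _ _

theorem stmt11 (q : ℕ) (hq : 1 ≤ q)
    (t : Fin (q + 1) → ℝ) (ht : ∀ i, t i ∈ Set.Ioc (0 : ℝ) 1)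
    (hlast : t (Fin.last q) = 1) (hinj : Function.Injective t)
    (ω : Fin (q + 1) → ℝ)
    (hexact : ∀ r : Polynomial ℝ, r.degree ≤ ((2 * q : ℕ) : WithBot ℕ) →
      ∑ i, ω i * r.eval (t i) = ∫ x in (0 : ℝ)..1, r.eval x)
    (p ptil : Polynomial ℝ)
    (hp : p.degree ≤ ((q + 1 : ℕ) : WithBot ℕ))
    (hptil : ptil.degree ≤ ((q : ℕ) : WithBot ℕ))
    (hinterp : ∀ i, ptil.eval (t i) = p.eval (t i) / t i) :
    ∫ x in (0 : ℝ)..1, p.derivative.eval x * ptil.eval x =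
      (1 / 2) * ∑ i, ω i * (ptil.eval (t i)) ^ 2
        + (1 / 2) * (p.eval 1) ^ 2 - p.eval 0 * ptil.eval 0 := by
  classical
  set w : Polynomial ℝ := ∏ i : Fin (q+1), (X - C (t i)) with hw_def
  have hw_monic : w.Monic := monic_prod_of_monic _ _ fun i _ => monic_X_sub_C _
  have hw_nd : w.natDegree = q + 1 := by
    rw [hw_def, natDegree_prod_of_monic _ _ fun i _ => monic_X_sub_C _]
    simp
  have hw_deg : w.degree = ((q+1 : ℕ) : WithBot ℕ) :=
    (degree_eq_natDegree hw_monic.ne_zero).trans (by rw [hw_nd])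
  have hwroot : ∀ i, w.eval (t i) = 0 := by
    intro i
    rw [hw_def, eval_prod]
    exact Finset.prod_eq_zero (Finset.mem_univ i) (by simp)
  have hw1 : w.eval 1 = 0 := by
    have := hwroot (Fin.last q); rwa [hlast] at this
  -- degree of X * ptil
  have hXptil_deg : (X * ptil).degree ≤ ((q+1 : ℕ) : WithBot ℕ) := by
    calc (X * ptil).degree ≤ X.degree + ptil.degree := degree_mul_le _ _
    _ ≤ (1 : WithBot ℕ) + ((q : ℕ) : WithBot ℕ) := by
        exact add_le_add (le_of_eq (degree_X)) hptil
    _ = ((q+1 : ℕ) : WithBot ℕ) := by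
        push_cast; ring
  set d : Polynomial ℝ := p - X * ptil with hd_def
  have hd_deg : d.degree ≤ ((q+1 : ℕ) : WithBot ℕ) :=
    le_trans (degree_sub_le _ _) (max_le hp hXptil_deg)
  have hd_root : ∀ i, d.eval (t i) = 0 := by
    intro i
    have hti : t i ≠ 0 := ne_of_gt (ht i).1
    simp only [hd_def, eval_sub, eval_mul, eval_X, hinterp i]
    field_simp
    ring
  set c : ℝ := d.coeff (q+1) with hc_def
  have he : d = C c * w := by
    have h0 : d - C c * w = 0 := by
      apply eq_zero_of_natDegree_lt_card_of_eval_eq_zero (f := t) _ hinj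
      · intro i; simp [eval_sub, hwroot i, hd_root i]
      · have hdeg2 : (d - C c * w).degree ≤ ((q : ℕ) : WithBot ℕ) := by
          rw [degree_le_iff_coeff_zero]
          intro m hm
          have hm' : q + 1 ≤ m := by
            exact_mod_cast Nat.succ_le_of_lt (by exact_mod_cast WithBot.coe_lt_coe.mp hm)
          rcases eq_or_lt_of_le hm' with h | h
          · subst h
            simp [coeff_sub, coeff_C_mul, ← hc_def,
              (hw_monic.coeff_natDegree ▸ (hw_nd ▸ rfl : w.coeff (q+1) = w.coeff w.natDegree))]
          · have h1 : d.coeff m = 0 :=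
              coeff_eq_zero_of_degree_lt (lt_of_le_of_lt hd_deg (by exact_mod_cast h))
            have h2 : w.coeff m = 0 :=
              coeff_eq_zero_of_degree_lt (by rw [hw_deg]; exact_mod_cast h)
            simp [coeff_sub, coeff_C_mul, h1, h2]
        rcases eq_or_ne (d - C c * w) 0 with h | h
        · rw [h]; simp [Fintype.card_fin]
        · have := natDegree_le_iff_degree_le.mpr hdeg2
          simp only [Fintype.card_fin]
          omega
    exact sub_eq_zero.mp h0
  have hp_eq : p = X * ptil + C c * w := by
    have h := he
    rw [hd_def] at h
    linear_combination h
  -- key polynomial identity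
  have key : (2:ℝ[X]) * (p.derivative * ptil)
      = ((X * ptil ^ 2).derivative + ptil ^ 2)
        + (2:ℝ[X]) * C c * (w * ptil).derivative
        - (2:ℝ[X]) * C c * (w * ptil.derivative) := by
    have hC2 : (C (2:ℝ) : ℝ[X]) = 2 := by
      rw [show (2:ℝ) = 1 + 1 from by norm_num, C_add, C_1, one_add_one_eq_two]
    rw [hp_eq]
    simp only [derivative_add, derivative_mul, derivative_X, derivative_C, derivative_pow, Nat.cast_ofNat, hC2]
    push_cast
    ring
  -- quadrature exactness for ptil^2
  have hQ1 : ∑ i, ω i * (ptil.eval (t i)) ^ 2 = ∫ x in (0:ℝ)..1, (ptil ^ 2).eval x := by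
    have hdeg : (ptil ^ 2).degree ≤ ((2 * q : ℕ) : WithBot ℕ) := by
      calc (ptil ^ 2).degree = (ptil * ptil).degree := by rw [sq]
      _ ≤ ptil.degree + ptil.degree := degree_mul_le _ _
      _ ≤ ((q : ℕ) : WithBot ℕ) + ((q : ℕ) : WithBot ℕ) := add_le_add hptil hptil
      _ = ((2 * q : ℕ) : WithBot ℕ) := by push_cast; ring
    have := hexact _ hdeg
    simpa [eval_pow] using this
  -- integral of w * ptil' vanishes
  have hQ2 : ∫ x in (0:ℝ)..1, (w * ptil.derivative).eval x = 0 := by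
    have hdeg : (w * ptil.derivative).degree ≤ ((2 * q : ℕ) : WithBot ℕ) := by
      rcases eq_or_ne ptil.derivative 0 with h | h
      · rw [h, mul_zero, degree_zero]; exact bot_le
      have hne : ptil ≠ 0 := fun h0 => h (by simp [h0])
      have hn1 : ptil.natDegree ≤ q := natDegree_le_iff_degree_le.mpr hptil
      have hn2 : ptil.derivative.natDegree ≤ q - 1 :=
        le_trans (natDegree_derivative_le _) (Nat.sub_le_sub_right hn1 1)
      calc (w * ptil.derivative).degree ≤ w.degree + ptil.derivative.degree :=
            degree_mul_le _ _
      _ = ((q + 1 : ℕ) : WithBot ℕ) + (ptil.derivative.natDegree : WithBot ℕ) := by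
          rw [hw_deg, degree_eq_natDegree h]
      _ = (((q + 1) + ptil.derivative.natDegree : ℕ) : WithBot ℕ) := by push_cast; ring
      _ ≤ ((2 * q : ℕ) : WithBot ℕ) := by
          have h9 : (q + 1) + ptil.derivative.natDegree ≤ 2 * q := by omega
          exact_mod_cast h9
    rw [← hexact _ hdeg]
    apply Finset.sum_eq_zero
    intro i _
    simp [hwroot i]
  -- FTC pieces
  have I1 : ∫ x in (0:ℝ)..1, (X * ptil ^ 2 : Polynomial ℝ).derivative.eval x
      = (ptil.eval 1) ^ 2 := by
    rw [poly_ftc]; simp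
  have I3 : ∫ x in (0:ℝ)..1, (w * ptil : Polynomial ℝ).derivative.eval x
      = -(w.eval 0 * ptil.eval 0) := by
    rw [poly_ftc]; simp [hw1]
  -- split the integral
  have int1 : IntervalIntegrable
      (fun x => (1/2 : ℝ) * (X * ptil ^ 2 : Polynomial ℝ).derivative.eval x)
      MeasureTheory.volume (0:ℝ) 1 :=
    (continuous_const.mul ((X * ptil ^ 2 : Polynomial ℝ).derivative.continuous_aeval)).intervalIntegrable _ _
  have int2 : IntervalIntegrable (fun x => (1/2 : ℝ) * (ptil ^ 2).eval x)
      MeasureTheory.volume (0:ℝ) 1 :=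
    (continuous_const.mul ((ptil ^ 2).continuous_aeval)).intervalIntegrable _ _
  have int3 : IntervalIntegrable
      (fun x => c * (w * ptil : Polynomial ℝ).derivative.eval x)
      MeasureTheory.volume (0:ℝ) 1 :=
    (continuous_const.mul ((w * ptil : Polynomial ℝ).derivative.continuous_aeval)).intervalIntegrable _ _
  have int4 : IntervalIntegrable
      (fun x => c * (w * ptil.derivative : Polynomial ℝ).eval x)
      MeasureTheory.volume (0:ℝ) 1 :=
    (continuous_const.mul ((w * ptil.derivative : Polynomial ℝ).continuous_aeval)).intervalIntegrable _ _
  have main : ∫ x in (0:ℝ)..1, p.derivative.eval x * ptil.eval x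
      = (1/2 : ℝ) * (∫ x in (0:ℝ)..1, (X * ptil ^ 2 : Polynomial ℝ).derivative.eval x)
        + (1/2 : ℝ) * (∫ x in (0:ℝ)..1, (ptil ^ 2).eval x)
        + c * (∫ x in (0:ℝ)..1, (w * ptil : Polynomial ℝ).derivative.eval x)
        - c * (∫ x in (0:ℝ)..1, (w * ptil.derivative : Polynomial ℝ).eval x) := by
    rw [← intervalIntegral.integral_const_mul, ← intervalIntegral.integral_const_mul,
      ← intervalIntegral.integral_const_mul, ← intervalIntegral.integral_const_mul,
      ← intervalIntegral.integral_add int1 int2,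
      ← intervalIntegral.integral_add (int1.add int2) int3,
      ← intervalIntegral.integral_sub ((int1.add int2).add int3) int4]
    apply intervalIntegral.integral_congr
    intro x _
    have hkx := congrArg (Polynomial.eval x) key
    simp only [eval_add, eval_sub, eval_mul, eval_C, eval_ofNat] at hkx
    simp only [eval_mul]
    linarith
  have p1 : p.eval 1 = ptil.eval 1 := by simp [hp_eq, hw1]
  have p0 : p.eval 0 = c * w.eval 0 := by simp [hp_eq]
  rw [main, I1, I3, hQ2, ← hQ1, p1, p0]
  ring
end

section
/- (Consequence of the Gauss–Radau identity) With the notation of the Gauss–Radau identity — p ∈ 𝓟_{q+1}([0,1]), p̃ the Gauss–Radau interpolant of t ↦ p(t)/t, Q the right-sided Gauss–Radau quadrature on [0,1] exact on 𝓟_{2q}, and 𝓘 the Gauss–Radau interpolation operator — it holds that ∫₀¹ p'(t) p̃(t) dt ≥ (1/2) ‖𝓘p‖²_{L²([0,1])} − p(0) p̃(0). -/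
open Polynomial

private lemma ftc_poly (P : Polynomial ℝ) :
    ∫ x in (0:ℝ)..1, P.derivative.eval x = P.eval 1 - P.eval 0 := by
  refine intervalIntegral.integral_deriv_eq_sub' (fun x => P.eval x) ?_ ?_ ?_
  · funext x; exact P.deriv
  · intro x _; exact P.differentiableAt
  · exact (P.derivative.continuous).continuousOn

theorem stmt12 (q : ℕ) (hq : 1 ≤ q)
    (t : Fin (q + 1) → ℝ) (ht : ∀ i, t i ∈ Set.Ioc (0 : ℝ) 1)
    (hlast : t (Fin.last q) = 1) (hinj : Function.Injective t)
    (ω : Fin (q + 1) → ℝ) (hω : ∀ i, 0 ≤ ω i)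
    (hexact : ∀ r : Polynomial ℝ, r.degree ≤ ((2 * q : ℕ) : WithBot ℕ) →
      ∑ i, ω i * r.eval (t i) = ∫ x in (0 : ℝ)..1, r.eval x)
    (p ptil Ip : Polynomial ℝ)
    (hp : p.degree ≤ ((q + 1 : ℕ) : WithBot ℕ))
    (hptil : ptil.degree ≤ ((q : ℕ) : WithBot ℕ))
    (hinterp : ∀ i, ptil.eval (t i) = p.eval (t i) / t i)
    (hIp : Ip.degree ≤ ((q : ℕ) : WithBot ℕ))
    (hIinterp : ∀ i, Ip.eval (t i) = p.eval (t i)) :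
    (1 / 2) * (∫ x in (0 : ℝ)..1, (Ip.eval x) ^ 2) - p.eval 0 * ptil.eval 0 ≤
      ∫ x in (0 : ℝ)..1, p.derivative.eval x * ptil.eval x := by
  classical
  have hint : ∀ P : Polynomial ℝ,
      IntervalIntegrable (fun x => P.eval x) MeasureTheory.volume 0 1 :=
    fun P => (P.continuous).intervalIntegrable 0 1
  have np : p.natDegree ≤ q + 1 := natDegree_le_iff_degree_le.mpr hp
  have nptil : ptil.natDegree ≤ q := natDegree_le_iff_degree_le.mpr hptil
  have nIp : Ip.natDegree ≤ q := natDegree_le_iff_degree_le.mpr hIp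
  have degle : ∀ r : Polynomial ℝ, r.natDegree ≤ 2 * q →
      ∑ i, ω i * r.eval (t i) = ∫ x in (0:ℝ)..1, r.eval x := by
    intro r hr
    exact hexact r ((degree_le_natDegree).trans (by exact_mod_cast hr))
  -- node facts
  have hnode : ∀ i, p.eval (t i) = t i * ptil.eval (t i) := by
    intro i
    have h0 : (0:ℝ) < t i := (ht i).1
    rw [hinterp i]; field_simp
  -- quadrature identities
  have hA : ∑ i, ω i * (p.derivative * ptil).eval (t i)
      = ∫ x in (0:ℝ)..1, (p.derivative * ptil).eval x := by
    apply degle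
    calc (p.derivative * ptil).natDegree
        ≤ p.derivative.natDegree + ptil.natDegree := natDegree_mul_le
      _ ≤ 2 * q := by have := natDegree_derivative_le p; omega
  have hB : ∑ i, ω i * (p * ptil.derivative).eval (t i)
      = ∫ x in (0:ℝ)..1, (p * ptil.derivative).eval x := by
    apply degle
    calc (p * ptil.derivative).natDegree
        ≤ p.natDegree + ptil.derivative.natDegree := natDegree_mul_le
      _ ≤ 2 * q := by have := natDegree_derivative_le ptil; omega
  have hS : ∑ i, ω i * ((X : Polynomial ℝ) * (ptil * ptil).derivative).eval (t i)
      = ∫ x in (0:ℝ)..1, ((X : Polynomial ℝ) * (ptil * ptil).derivative).eval x := by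
    apply degle
    calc ((X : Polynomial ℝ) * (ptil * ptil).derivative).natDegree
        ≤ (X : Polynomial ℝ).natDegree + (ptil * ptil).derivative.natDegree :=
          natDegree_mul_le
      _ ≤ 2 * q := by
          have h1 := natDegree_derivative_le (ptil * ptil)
          have h2 : (ptil * ptil).natDegree ≤ 2 * q := by
            have := natDegree_mul_le (p := ptil) (q := ptil); omega
          simp only [natDegree_X]
          omega
  have hP2 : ∑ i, ω i * (ptil * ptil).eval (t i)
      = ∫ x in (0:ℝ)..1, (ptil * ptil).eval x := by
    apply degle
    have := natDegree_mul_le (p := ptil) (q := ptil); omega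
  have hI2 : ∑ i, ω i * (Ip * Ip).eval (t i)
      = ∫ x in (0:ℝ)..1, (Ip * Ip).eval x := by
    apply degle
    have := natDegree_mul_le (p := Ip) (q := Ip); omega
  -- FTC identity for p * ptil
  have ftc1 : (∫ x in (0:ℝ)..1, (p.derivative * ptil + p * ptil.derivative).eval x)
      = p.eval 1 * ptil.eval 1 - p.eval 0 * ptil.eval 0 := by
    have h := ftc_poly (p * ptil)
    rw [derivative_mul] at h
    rw [h, eval_mul, eval_mul]
  have split1 : (∫ x in (0:ℝ)..1, (p.derivative * ptil + p * ptil.derivative).eval x)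
      = (∫ x in (0:ℝ)..1, (p.derivative * ptil).eval x)
        + (∫ x in (0:ℝ)..1, (p * ptil.derivative).eval x) := by
    simp only [eval_add]
    exact intervalIntegral.integral_add (hint _) (hint _)
  -- FTC identity for X * ptil^2
  have ftc2 : (∫ x in (0:ℝ)..1, ((X : Polynomial ℝ) * (ptil * ptil).derivative).eval x)
      = ptil.eval 1 * ptil.eval 1 - (∫ x in (0:ℝ)..1, (ptil * ptil).eval x) := by
    have hg : (X : Polynomial ℝ) * (ptil * ptil).derivative
        = ((X : Polynomial ℝ) * (ptil * ptil)).derivative - ptil * ptil := by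
      rw [show ((X : Polynomial ℝ) * (ptil * ptil)).derivative
          = derivative (X : Polynomial ℝ) * (ptil * ptil)
            + (X : Polynomial ℝ) * (ptil * ptil).derivative from derivative_mul,
        derivative_X]
      ring
    rw [hg]
    simp only [eval_sub]
    rw [intervalIntegral.integral_sub (hint _) (hint _), ftc_poly]
    simp [eval_mul]
  -- nodewise relation between p * ptil' and X * (ptil^2)'
  have hBsum : ∑ i, ω i * (p * ptil.derivative).eval (t i)
      = (1/2) * ∑ i, ω i * ((X : Polynomial ℝ) * (ptil * ptil).derivative).eval (t i) := by
    rw [Finset.mul_sum]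
    refine Finset.sum_congr rfl fun i _ => ?_
    simp only [eval_mul, eval_X, derivative_mul, eval_add]
    rw [hnode i]; ring
  -- comparison at nodes
  have hcomp : ∑ i, ω i * (Ip * Ip).eval (t i) ≤ ∑ i, ω i * (ptil * ptil).eval (t i) := by
    refine Finset.sum_le_sum fun i _ => ?_
    have h0 : (0:ℝ) < t i := (ht i).1
    have h1 : t i ≤ 1 := (ht i).2
    have hle : (Ip * Ip).eval (t i) ≤ (ptil * ptil).eval (t i) := by
      simp only [eval_mul, hIinterp i, hnode i]
      have hnn : 0 ≤ (1 - t i) * (1 + t i) * (ptil.eval (t i) * ptil.eval (t i)) :=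
        mul_nonneg (mul_nonneg (by linarith) (by linarith)) (mul_self_nonneg _)
      nlinarith [hnn]
    exact mul_le_mul_of_nonneg_left hle (hω i)
  -- endpoint value
  have h1eq : ptil.eval 1 = p.eval 1 := by
    have h := hinterp (Fin.last q)
    rw [hlast] at h
    simpa using h
  -- rewrite goal integrands
  have e1 : (∫ x in (0:ℝ)..1, (Ip.eval x) ^ 2) = ∫ x in (0:ℝ)..1, (Ip * Ip).eval x := by
    refine intervalIntegral.integral_congr fun x _ => ?_
    simp [sq]
  have e2 : (∫ x in (0:ℝ)..1, p.derivative.eval x * ptil.eval x)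
      = ∫ x in (0:ℝ)..1, (p.derivative * ptil).eval x := by
    refine intervalIntegral.integral_congr fun x _ => ?_
    simp
  rw [e1, e2]
  have key : (∫ x in (0:ℝ)..1, (Ip * Ip).eval x) ≤ ∫ x in (0:ℝ)..1, (ptil * ptil).eval x := by
    rw [← hI2, ← hP2]; exact hcomp
  have hsq : (0:ℝ) ≤ p.eval 1 ^ 2 := sq_nonneg _
  rw [ftc1, ← hB, hBsum, hS, ftc2, h1eq] at split1
  linarith [split1, key, mul_self_nonneg (p.eval 1)]
end

section
/- (Jump representation of continuous piecewise polynomials) Let ξ be a continuous function on [0, T], piecewise polynomial of degree ≤ q+1 on each interval I_m = (t_{m-1}, t_m]. Let 𝓘_m denote Lagrange interpolation at q+1 points t_{m,0},…,t_{m,q} ∈ I_m into 𝓟_q(I_m), and let θ_m ∈ 𝓟_{q+1}(I_m) be the unique polynomial with θ_m(t_{m,i}) = 0 for all i and θ_m(t_{m-1}) = 1. Then on each I_m: ξ = 𝓘_m ξ − ⟦𝓘ξ⟧_{m-1} · θ_m, where ⟦𝓘ξ⟧_{m-1} := 𝓘_m ξ(t_{m-1}⁺) − 𝓘_{m-1}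 ξ(t_{m-1}⁻) for m ≥ 2 and ⟦𝓘ξ⟧_0 := 𝓘_1 ξ(t_0⁺) − ξ(t_0). -/
theorem stmt13 (q : ℕ) (a b : ℝ) (hab : a < b)
    (s : Fin (q + 1) → ℝ) (hs : ∀ i, s i ∈ Set.Ioc a b) (hinj : Function.Injective s)
    (ξ : ℝ → ℝ) (P : Polynomial ℝ) (hP : P.degree ≤ ((q + 1 : ℕ) : WithBot ℕ))
    (hξP : ∀ x ∈ Set.Ioc a b, ξ x = P.eval x)
    (hcont : ξ a = P.eval a)
    (Iξ : Polynomial ℝ) (hIdeg : Iξ.degree ≤ ((q : ℕ) : WithBot ℕ))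
    (hI : ∀ i, Iξ.eval (s i) = ξ (s i))
    (θ : Polynomial ℝ) (hθdeg : θ.degree ≤ ((q + 1 : ℕ) : WithBot ℕ))
    (hθ0 : ∀ i, θ.eval (s i) = 0) (hθa : θ.eval a = 1) :
    ∀ x ∈ Set.Ioc a b, ξ x = Iξ.eval x - (Iξ.eval a - ξ a) * θ.eval x := by
  set c : ℝ := Iξ.eval a - ξ a with hc
  set D : Polynomial ℝ := P - Iξ + Polynomial.C c * θ with hD
  have hDdeg : D.degree ≤ ((q + 1 : ℕ) : WithBot ℕ) := by
    apply le_trans (Polynomial.degree_add_le _ _)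
    apply max_le
    · apply le_trans (Polynomial.degree_sub_le _ _)
      apply max_le hP
      exact le_trans hIdeg (by exact_mod_cast Nat.le_succ q)
    · apply le_trans (Polynomial.degree_mul_le _ _)
      calc (Polynomial.C c).degree + θ.degree ≤ 0 + ((q + 1 : ℕ) : WithBot ℕ) :=
            add_le_add Polynomial.degree_C_le hθdeg
        _ = ((q + 1 : ℕ) : WithBot ℕ) := zero_add _
  have hDzero : D = 0 := by
    have key : ∀ i : Fin (q + 2), D.eval ((Fin.cons a s : Fin (q + 2) → ℝ) i) = 0 := by
      intro i
      refine Fin.cases ?_ ?_ i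
      · simp only [Fin.cons_zero, hD, Polynomial.eval_add, Polynomial.eval_sub,
          Polynomial.eval_mul, Polynomial.eval_C, hθa, hc, hcont]
        ring
      · intro j
        simp only [Fin.cons_succ, hD, Polynomial.eval_add, Polynomial.eval_sub,
          Polynomial.eval_mul, Polynomial.eval_C, hθ0 j, hI j, hξP _ (hs j)]
        ring
    have hinj' : Function.Injective (Fin.cons a s : Fin (q + 2) → ℝ) := by
      intro i j hij
      induction i using Fin.cases with
      | zero =>
        induction j using Fin.cases with
        | zero => rfl
        | succ j' =>
          simp only [Fin.cons_zero, Fin.cons_succ] at hij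
          exact absurd hij.symm (ne_of_gt (hs j').1)
      | succ i' =>
        induction j using Fin.cases with
        | zero =>
          simp only [Fin.cons_zero, Fin.cons_succ] at hij
          exact absurd hij (ne_of_gt (hs i').1)
        | succ j' =>
          simp only [Fin.cons_succ] at hij
          exact congrArg Fin.succ (hinj hij)
    rcases eq_or_ne D 0 with h | h
    · exact h
    · exact Polynomial.eq_zero_of_natDegree_lt_card_of_eval_eq_zero D hinj' key
        (by
          have := Polynomial.natDegree_le_iff_degree_le.mpr hDdeg
          simpa [Fintype.card_fin] using Nat.lt_succ_of_le this)
  intro x hx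
  have := congrArg (Polynomial.eval x) hDzero
  simp only [hD, Polynomial.eval_add, Polynomial.eval_sub, Polynomial.eval_mul,
    Polynomial.eval_C, Polynomial.eval_zero] at this
  rw [hξP x hx]
  linarith
end
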